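/- arXiv:2601.16848 — 2 statements merged into one kernel-verified Lean document; each statement's English description precedes it below -/
import Mathlib

section
/- For every integer M ≥ 1, lim_{x → ∞} x · e^{x} · Σ_{i=0}^{M−1} E_{i+1}(x) = M. Equivalently, for a noise-limited link with fixed Gamma(M) fading, the ergodic capacity B·e^{aB}·Σ_{i=0}^{M−1} E_{i+1}(aB) (a > 0 fixed) converges to M/a as the bandwidth B tends to infinity. -/
/-! On `[1, ∞)` we have `1 ≤ t ≤ e^{t-1}`, hence `e^{-n(t-1)} ≤ t^{-n} ≤ 1`; integrating against
`e^{-xt}` squeezes `E_n(x)` between `e^{-x}/(x+n)` and `e^{-x}/x`, so `x e^x E_n(x) → 1` for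
each `n`. Summing over `n` and substituting `x = aB` gives both limits. -/

open MeasureTheory Real Filter Topology

/-- The generalized exponential integral `E_n(x) = ∫_1^∞ e^{-x t} / t^n dt`. -/
noncomputable def expInt (n : ℕ) (x : ℝ) : ℝ :=
  ∫ t in Set.Ioi (1 : ℝ), Real.exp (-x * t) / t ^ n

lemma integral_exp_neg_mul_Ioi_one {c : ℝ} (hc : 0 < c) :
    ∫ t in Set.Ioi (1 : ℝ), exp (-c * t) = exp (-c) / c := by
  have h := integral_comp_mul_left_Ioi (fun y : ℝ => exp (-y)) 1 hc
  simp only [smul_eq_mul, mul_one] at h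
  simp only [neg_mul, h, integral_exp_neg_Ioi, inv_mul_eq_div]

lemma pow_le_exp_mul_sub_one (n : ℕ) {t : ℝ} (ht : 0 ≤ t) : t ^ n ≤ exp (n * (t - 1)) := by
  calc t ^ n ≤ exp (t - 1) ^ n := by gcongr; linarith [add_one_le_exp (t - 1)]
    _ = exp (n * (t - 1)) := by rw [← exp_nat_mul]

lemma exp_neg_mul_div_pow_le (n : ℕ) (x : ℝ) {t : ℝ} (ht : 1 ≤ t) :
    exp (-x * t) / t ^ n ≤ exp (-x * t) :=
  div_le_self (exp_nonneg _) (one_le_pow₀ ht)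

lemma exp_mul_exp_neg_add_mul_le (n : ℕ) (x : ℝ) {t : ℝ} (ht : 0 < t) :
    exp n * exp (-(x + n) * t) ≤ exp (-x * t) / t ^ n := by
  rw [le_div_iff₀ (by positivity)]
  calc exp n * exp (-(x + n) * t) * t ^ n
      ≤ exp n * exp (-(x + n) * t) * exp (n * (t - 1)) := by
        gcongr; exact pow_le_exp_mul_sub_one n ht.le
    _ = exp (-x * t) := by rw [← exp_add, ← exp_add]; ring_nf

lemma integrableOn_exp_neg_mul_div_pow (n : ℕ) {x : ℝ} (hx : 0 < x) :
    IntegrableOn (fun t : ℝ => exp (-x * t) / t ^ n) (Set.Ioi 1) := by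
  refine (exp_neg_integrableOn_Ioi 1 hx).mono'
    (Measurable.aestronglyMeasurable (by fun_prop)) ?_
  filter_upwards [ae_restrict_mem measurableSet_Ioi] with t ht
  rw [norm_of_nonneg (div_nonneg (exp_nonneg _) (pow_nonneg (zero_le_one.trans ht.le) n))]
  simpa only [neg_mul] using exp_neg_mul_div_pow_le n x (le_of_lt ht)

lemma expInt_le_exp_neg_div (n : ℕ) {x : ℝ} (hx : 0 < x) : expInt n x ≤ exp (-x) / x := by
  rw [expInt, ← integral_exp_neg_mul_Ioi_one hx]
  refine setIntegral_mono_on (integrableOn_exp_neg_mul_div_pow n hx)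
    (by simpa only [neg_mul] using exp_neg_integrableOn_Ioi 1 hx) measurableSet_Ioi
    fun t ht => exp_neg_mul_div_pow_le n x (le_of_lt ht)

lemma exp_neg_div_add_le_expInt (n : ℕ) {x : ℝ} (hx : 0 < x) :
    exp (-x) / (x + n) ≤ expInt n x := by
  have hxn : 0 < x + n := by positivity
  calc exp (-x) / (x + n) = ∫ t in Set.Ioi (1 : ℝ), exp n * exp (-(x + n) * t) := by
        rw [integral_const_mul, integral_exp_neg_mul_Ioi_one hxn, mul_div_assoc', ← exp_add]
        ring_nf
    _ ≤ expInt n x := by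
      have hint : IntegrableOn (fun t : ℝ => exp (-(x + n) * t)) (Set.Ioi 1) := by
        simpa only [neg_mul] using exp_neg_integrableOn_Ioi 1 hxn
      refine setIntegral_mono_on (hint.const_mul _)
        (integrableOn_exp_neg_mul_div_pow n hx) measurableSet_Ioi
        fun t ht => exp_mul_exp_neg_add_mul_le n x (zero_lt_one.trans ht)

lemma tendsto_div_add_const_atTop (c : ℝ) : Tendsto (fun x : ℝ => x / (x + c)) atTop (𝓝 1) := by
  have h : Tendsto (fun x : ℝ => 1 - c / (x + c)) atTop (𝓝 (1 - 0)) :=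
    tendsto_const_nhds.sub <|
      tendsto_const_nhds.div_atTop (tendsto_atTop_add_const_right _ _ tendsto_id)
  rw [sub_zero] at h
  refine h.congr' ?_
  filter_upwards [eventually_gt_atTop (-c)] with x hx
  have hxc : x + c ≠ 0 := by linarith
  field_simp
  ring

lemma tendsto_mul_exp_mul_expInt (n : ℕ) :
    Tendsto (fun x => x * exp x * expInt n x) atTop (𝓝 1) := by
  refine tendsto_of_tendsto_of_tendsto_of_le_of_le' (tendsto_div_add_const_atTop n) tendsto_const_nhds ?_ ?_
  all_goals filter_upwards [eventually_gt_atTop 0] with x hx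
  · calc x / (x + n) = x * exp x * (exp (-x) / (x + n)) := by
          rw [exp_neg]; field_simp
      _ ≤ x * exp x * expInt n x := by gcongr; exact exp_neg_div_add_le_expInt n hx
  · calc x * exp x * expInt n x ≤ x * exp x * (exp (-x) / x) := by
          gcongr; exact expInt_le_exp_neg_div n hx
      _ = 1 := by rw [exp_neg]; field_simp

theorem tendsto_mul_exp_mul_sum_expInt_general (M : ℕ) :
    Tendsto (fun x : ℝ => x * Real.exp x * ∑ i ∈ Finset.range M, expInt (i + 1) x)
      atTop (𝓝 (M : ℝ)) ∧
    ∀ a : ℝ, 0 < a →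
      Tendsto (fun B : ℝ =>
          B * Real.exp (a * B) * ∑ i ∈ Finset.range M, expInt (i + 1) (a * B))
        atTop (𝓝 ((M : ℝ) / a)) := by
  have hsum : Tendsto (fun x : ℝ => x * exp x * ∑ i ∈ Finset.range M, expInt (i + 1) x)
      atTop (𝓝 (M : ℝ)) := by
    simpa [Finset.mul_sum] using
      tendsto_finsetSum (Finset.range M) fun i _ => tendsto_mul_exp_mul_expInt (i + 1)
  refine ⟨hsum, fun a ha => ?_⟩
  have hscaled := (hsum.comp (tendsto_id.const_mul_atTop ha)).const_mul a⁻¹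
  rw [← inv_mul_eq_div]
  refine hscaled.congr fun B => ?_
  simp only [Function.comp_apply, id]
  field_simp

/-- For every integer `M ≥ 1`, `lim_{x → ∞} x e^x Σ_{i=0}^{M−1} E_{i+1}(x) = M`.
Equivalently, for fixed `a > 0`, the noise-limited ergodic capacity
`B e^{aB} Σ_{i=0}^{M−1} E_{i+1}(aB)` converges to `M/a` as `B → ∞`. -/
theorem tendsto_mul_exp_mul_sum_expInt (M : ℕ) (hM : 1 ≤ M) :
    Tendsto (fun x : ℝ => x * Real.exp x * ∑ i ∈ Finset.range M, expInt (i + 1) x)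
      atTop (𝓝 (M : ℝ)) ∧
    ∀ a : ℝ, 0 < a →
      Tendsto (fun B : ℝ =>
          B * Real.exp (a * B) * ∑ i ∈ Finset.range M, expInt (i + 1) (a * B))
        atTop (𝓝 ((M : ℝ) / a)) :=
  tendsto_mul_exp_mul_sum_expInt_general M
end

section
/- For every integer M ≥ 1 and every real a > 0, the function B ↦ B · e^{aB} · Σ_{i=0}^{M−1} E_{i+1}(a B) is concave on (0, ∞). -/
open MeasureTheory Real

/-!
Substituting `t = 1 + σ / B` gives `B e^{aB} E_n(aB) = ∫_0^∞ e^{-aσ} (B / (B + σ))^n dσ`,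
so the function is a mixture, with weights `e^{-aσ} > 0`, of the functions
`g_σ(B) = Σ_{k=1}^M (B / (B + σ))^k`. Summing the geometric series,
`σ g_σ(B) = B - (B + σ) (B / (B + σ))^{M+1}`, and the subtracted term is the perspective of
the convex function `u ↦ u^{M+1}` along the affine path `B ↦ (B, B + σ)`, hence convex in `B`.
So every `g_σ` is concave, and so is their integral.
-/

open Set

theorem integral_comp_add_right_Ioi {E : Type*} [NormedAddCommGroup E] [NormedSpace ℝ E]
    (f : ℝ → E) (a c : ℝ) : ∫ x in Ioi a, f (x + c) = ∫ x in Ioi (a + c), f x := by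
  rw [← (measurePreserving_add_right volume c).setIntegral_preimage_emb
    (measurableEmbedding_addRight c) f (Ioi (a + c)), preimage_add_const_Ioi, add_sub_cancel_right]

theorem ConvexOn.mul_comp_div_add_const {f : ℝ → ℝ} (hf : ConvexOn ℝ (Ici 0) f) {s : ℝ}
    (hs : 0 ≤ s) : ConvexOn ℝ (Ioi 0) (fun x => (x + s) * f (x / (x + s))) := by
  refine ⟨convex_Ioi 0, fun x (hx : 0 < x) y (hy : 0 < y) α β hα hβ hαβ => ?_⟩
  simp only [smul_eq_mul]
  set z := α * x + β * y
  have hx' : 0 < x + s := by linarith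
  have hy' : 0 < y + s := by linarith
  have hzs : 0 < z + s := by
    have : 0 < z := convex_Ioi (0 : ℝ) hx hy hα hβ hαβ
    positivity
  have hweights : α * (x + s) / (z + s) + β * (y + s) / (z + s) = 1 := by
    rw [← add_div, div_eq_one_iff_eq hzs.ne']
    linear_combination s * hαβ
  have hmix : α * (x + s) / (z + s) * (x / (x + s)) + β * (y + s) / (z + s) * (y / (y + s))
      = z / (z + s) := by field_simp; rfl
  have hjensen := hf.2 (x := x / (x + s)) (y := y / (y + s)) (by simp only [mem_Ici]; positivity)
    (by simp only [mem_Ici]; positivity) (by positivity) (by positivity) hweights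
  rw [smul_eq_mul, smul_eq_mul, hmix, smul_eq_mul, smul_eq_mul] at hjensen
  calc (z + s) * f (z / (z + s))
      ≤ (z + s) * (α * (x + s) / (z + s) * f (x / (x + s))
          + β * (y + s) / (z + s) * f (y / (y + s))) :=
        mul_le_mul_of_nonneg_left hjensen hzs.le
    _ = α * ((x + s) * f (x / (x + s))) + β * ((y + s) * f (y / (y + s))) := by
        field_simp

theorem mul_sum_div_add_pow {x s : ℝ} (hxs : x + s ≠ 0) (M : ℕ) :
    s * ∑ i ∈ Finset.range M, (x / (x + s)) ^ (i + 1)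
      = x - (x + s) * (x / (x + s)) ^ (M + 1) := by
  have hr : (x + s) * (x / (x + s)) = x := mul_div_cancel₀ x hxs
  induction M with
  | zero => simp only [Finset.range_zero, Finset.sum_empty]; linear_combination hr
  | succ M ih =>
    rw [Finset.sum_range_succ, mul_add, ih]
    linear_combination (x / (x + s)) ^ (M + 1) * hr

theorem concaveOn_sum_div_add_pow (M : ℕ) {s : ℝ} (hs : 0 < s) :
    ConcaveOn ℝ (Ioi 0) (fun x => ∑ i ∈ Finset.range M, (x / (x + s)) ^ (i + 1)) := by
  refine (((concaveOn_id (convex_Ioi 0)).sub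
    ((convexOn_pow (M + 1)).mul_comp_div_add_const hs.le)).smul (inv_nonneg.2 hs.le)).congr ?_
  intro x (hx : 0 < x)
  simp only [Pi.sub_apply, id, smul_eq_mul]
  rw [← mul_sum_div_add_pow (by positivity), inv_mul_cancel_left₀ hs.ne']

theorem integrableOn_exp_neg_mul_mul_div_add_pow {a : ℝ} (ha : 0 < a) {B : ℝ} (hB : 0 ≤ B)
    (n : ℕ) :
    IntegrableOn (fun σ => exp (-a * σ) * (B / (B + σ)) ^ n) (Ioi 0) := by
  refine (exp_neg_integrableOn_Ioi 0 ha).mono' ?_ ?_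
  · refine ContinuousOn.aestronglyMeasurable ?_ measurableSet_Ioi
    refine continuous_exp.comp_continuousOn (by fun_prop) |>.mul ((continuousOn_const.div
      (by fun_prop) fun σ (hσ : 0 < σ) => by positivity).pow n)
  · filter_upwards [ae_restrict_mem measurableSet_Ioi] with σ (hσ : 0 < σ)
    have hle : B / (B + σ) ≤ 1 := div_le_one_of_le₀ (by linarith) (by positivity)
    rw [norm_mul, norm_of_nonneg (exp_pos _).le, norm_of_nonneg (by positivity), neg_mul]
    exact mul_le_of_le_one_right (exp_pos _).le (pow_le_one₀ (by positivity) hle)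

theorem mul_exp_mul_expInt_eq_integral (a : ℝ) {B : ℝ} (hB : 0 < B) (n : ℕ) :
    B * exp (a * B) * expInt n (a * B) = ∫ σ in Ioi 0, exp (-a * σ) * (B / (B + σ)) ^ n := by
  set h : ℝ → ℝ := fun σ => exp (-a * σ) * (B / (B + σ)) ^ n
  have hshift : exp (a * B) * expInt n (a * B) = ∫ u in Ioi 0, h (B * u) := by
    rw [expInt, ← integral_const_mul, ← zero_add (1 : ℝ), ← integral_comp_add_right_Ioi]
    refine setIntegral_congr_fun measurableSet_Ioi fun u (hu : 0 < u) => ?_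
    have hexp : exp (a * B) * exp (-(a * B) * (u + 1)) = exp (-a * (B * u)) := by
      rw [← exp_add]; ring_nf
    have hfrac : B / (B + B * u) = (u + 1)⁻¹ := by field_simp; ring
    simp only [h]
    rw [← hexp, hfrac, inv_pow, mul_assoc, div_eq_mul_inv]
  rw [mul_assoc, hshift, integral_comp_mul_left_Ioi h 0 hB, mul_zero, smul_eq_mul,
    mul_inv_cancel_left₀ hB.ne']

theorem concaveOn_noise_limited_capacity_general (M : ℕ) (a : ℝ) (ha : 0 < a) :
    ConcaveOn ℝ (Set.Ioi 0)
      (fun B : ℝ => B * Real.exp (a * B) * ∑ i ∈ Finset.range M, expInt (i + 1) (a * B)) := by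
  have hrepr : EqOn (fun B => ∫ σ in Ioi 0,
      exp (-a * σ) * ∑ i ∈ Finset.range M, (B / (B + σ)) ^ (i + 1))
      (fun B => B * exp (a * B) * ∑ i ∈ Finset.range M, expInt (i + 1) (a * B)) (Ioi 0) := by
    intro B (hB : 0 < B)
    simp only [Finset.mul_sum, mul_exp_mul_expInt_eq_integral a hB]
    exact integral_finsetSum _
      fun i _ => integrableOn_exp_neg_mul_mul_div_add_pow ha hB.le (i + 1)
  refine (integral_concaveOn_of_integrand_ae (convex_Ioi 0) ?_
    fun B (hB : 0 < B) => ?_).congr hrepr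
  · filter_upwards [ae_restrict_mem measurableSet_Ioi] with σ (hσ : 0 < σ)
    exact (concaveOn_sum_div_add_pow M hσ).smul (exp_pos _).le
  · simpa only [Finset.mul_sum] using
      integrable_finsetSum _ fun i _ => integrableOn_exp_neg_mul_mul_div_add_pow ha hB.le (i + 1)

/-- For every integer `M ≥ 1` and real `a > 0`, the (scaled) noise-limited ergodic
capacity `B ↦ B e^{aB} Σ_{i=0}^{M−1} E_{i+1}(aB)` is concave on `(0, ∞)`. -/
theorem concaveOn_noise_limited_capacity (M : ℕ) (hM : 1 ≤ M) (a : ℝ) (ha : 0 < a) :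
    ConcaveOn ℝ (Set.Ioi 0)
      (fun B : ℝ => B * Real.exp (a * B) * ∑ i ∈ Finset.range M, expInt (i + 1) (a * B)) :=
  concaveOn_noise_limited_capacity_general M a ha
end
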